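/- The function z ↦ 1/sin(π z) + 1/sin((2√2 − 1)π z) is not a meromorphic almost periodic function on ℂ: its zeros and poles are not separated, i.e. for every δ > 0 there exist a zero z' and a pole z'' of this function with |z' − z''| < δ. -/

import Mathlib

open Complex Filter Topology OnePoint Set MeasureTheory

noncomputable section

/-- The open horizontal strip `{z : a < Im z < b}` with extended-real bounds. -/
def Strip (a b : EReal) : Set ℂ := {z : ℂ | a < (z.im : EReal) ∧ (z.im : EReal) < b}

/-- A set `E ⊆ ℝ` is relatively dense. -/
def RelDense (E : Set ℝ) : Prop := ∃ L > (0 : ℝ), ∀ x : ℝ, ∃ τ ∈ E, x ≤ τ ∧ τ ≤ x + L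

/-- The spherical (chordal) metric on `ℂ ∪ {∞}`. -/
def sphDist : OnePoint ℂ → OnePoint ℂ → ℝ
  | (z : ℂ), (w : ℂ) => ‖z - w‖ /
      (Real.sqrt (1 + ‖z‖ ^ 2) * Real.sqrt (1 + ‖w‖ ^ 2))
  | (z : ℂ), ∞ => 1 / Real.sqrt (1 + ‖z‖ ^ 2)
  | ∞, (w : ℂ) => 1 / Real.sqrt (1 + ‖w‖ ^ 2)
  | ∞, ∞ => 0

/-- Inversion `w ↦ 1/w` on the Riemann sphere. -/
def sphInv : OnePoint ℂ → OnePoint ℂ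
  | (z : ℂ) => if z = 0 then ∞ else ((z⁻¹ : ℂ) : OnePoint ℂ)
  | ∞ => ((0 : ℂ) : OnePoint ℂ)

/-- `f : ℂ → ℂ ∪ {∞}` is meromorphic on an (open) set `U`: near every point of `U`
it is either given by an analytic function, or is the reciprocal of an analytic
function that does not vanish identically near the point (poles and the value `∞`
occurring exactly at the zeros of that function). -/
def SphMeromorphicOn (f : ℂ → OnePoint ℂ) (U : Set ℂ) : Prop :=
  ∀ z₀ ∈ U,
    (∃ g : ℂ → ℂ, AnalyticAt ℂ g z₀ ∧ ∀ᶠ z in nhds z₀, f z = ((g z : ℂ) : OnePoint ℂ)) ∨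
    (∃ g : ℂ → ℂ, AnalyticAt ℂ g z₀ ∧ ¬ (∀ᶠ z in nhds z₀, g z = 0) ∧
      ∀ᶠ z in nhds z₀, f z = sphInv (g z))

/-- Meromorphic almost periodic function on the strip `{a < Im z < b}`. -/
def MeromorphicAPOn (f : ℂ → OnePoint ℂ) (a b : EReal) : Prop :=
  SphMeromorphicOn f (Strip a b) ∧
  ∀ ε > (0 : ℝ), ∀ α β : ℝ, a < (α : EReal) → α < β → (β : EReal) < b →
    RelDense {τ : ℝ | ∀ z ∈ Strip (α : EReal) (β : EReal), sphDist (f (z + τ)) (f z) < ε}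

/-- Analytic almost periodic function on the strip `{a < Im z < b}`. -/
def AnalyticAPOn (g : ℂ → ℂ) (a b : EReal) : Prop :=
  DifferentiableOn ℂ g (Strip a b) ∧
  ∀ ε > (0 : ℝ), ∀ α β : ℝ, a < (α : EReal) → α < β → (β : EReal) < b →
    RelDense {τ : ℝ | ∀ z ∈ Strip (α : EReal) (β : EReal), ‖g (z + τ) - g z‖ < ε}

/-- `f` has a zero of order `m` at `c`. -/
def ZeroOfOrder (f : ℂ → OnePoint ℂ) (c : ℂ) (m : ℕ) : Prop :=
  0 < m ∧ ∃ h : ℂ → ℂ, AnalyticAt ℂ h c ∧ h c ≠ 0 ∧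
    ∀ᶠ z in nhds c, f z = (((z - c) ^ m * h z : ℂ) : OnePoint ℂ)

/-- `f` has a pole of order `m` at `c`. -/
def PoleOfOrder (f : ℂ → OnePoint ℂ) (c : ℂ) (m : ℕ) : Prop :=
  0 < m ∧ ∃ h : ℂ → ℂ, AnalyticAt ℂ h c ∧ h c ≠ 0 ∧
    ∀ᶠ z in nhds c, f z = sphInv (((z - c) ^ m * h z : ℂ))

/-- Almost periodic (continuous) function on the real line. -/
def APFunction (u : ℝ → ℝ) : Prop :=
  Continuous u ∧ ∀ ε > (0 : ℝ), RelDense {τ : ℝ | ∀ x : ℝ, |u (x + τ) - u x| < ε}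

open scoped Classical

/-- The meromorphic function `1/sin(π z) + 1/sin((2√2 - 1) π z)` on `ℂ`, regarded as a
map into `ℂ ∪ {∞}` (its poles are the points where one of the two sines vanishes). -/
def sinRecipSum (z : ℂ) : OnePoint ℂ :=
  if Complex.sin ((Real.pi : ℂ) * z) = 0 ∨
      Complex.sin (((2 * Real.sqrt 2 - 1 : ℝ) : ℂ) * (Real.pi : ℂ) * z) = 0 then ∞
  else ((1 / Complex.sin ((Real.pi : ℂ) * z) +
         1 / Complex.sin (((2 * Real.sqrt 2 - 1 : ℝ) : ℂ) * (Real.pi : ℂ) * z) : ℂ) :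
        OnePoint ℂ)

namespace SRS
def s1 (t : ℝ) : ℝ := Real.sin (Real.pi * t)
def s2 (t : ℝ) : ℝ := Real.sin ((2 * Real.sqrt 2 - 1) * Real.pi * t)
def Nn (t : ℝ) : ℝ := s1 t + s2 t
def Dd (t : ℝ) : ℝ := s1 t * s2 t

lemma csin1 (t : ℝ) : Complex.sin ((Real.pi : ℂ) * (t:ℂ)) = ((s1 t : ℝ) : ℂ) := by
  rw [← Complex.ofReal_mul, s1]; exact (Complex.ofReal_sin _).symm

lemma csin2 (t : ℝ) :
    Complex.sin (((2 * Real.sqrt 2 - 1 : ℝ) : ℂ) * (Real.pi : ℂ) * (t:ℂ)) = ((s2 t : ℝ) : ℂ) := by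
  rw [← Complex.ofReal_mul, ← Complex.ofReal_mul, s2]; exact (Complex.ofReal_sin _).symm

lemma srs_coe (t : ℝ) (h1 : s1 t ≠ 0) (h2 : s2 t ≠ 0) :
    sinRecipSum (t:ℂ) = ((((s1 t)⁻¹ + (s2 t)⁻¹ : ℝ) : ℂ) : OnePoint ℂ) := by
  rw [sinRecipSum, csin1, csin2, if_neg]
  · congr 1
    push_cast
    rw [one_div, one_div]
  · push_neg
    exact ⟨by exact_mod_cast h1, by exact_mod_cast h2⟩

lemma srs_infty (t : ℝ) (h : s1 t = 0 ∨ s2 t = 0) : sinRecipSum (t:ℂ) = ∞ := by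
  rw [sinRecipSum, csin1, csin2, if_pos]
  rcases h with h | h
  · exact Or.inl (by exact_mod_cast h)
  · exact Or.inr (by exact_mod_cast h)

lemma sqrt_one_add_div_sq {n d : ℝ} (hd : d ≠ 0) :
    Real.sqrt (1 + (n/d)^2) = Real.sqrt (n^2 + d^2) / |d| := by
  have h : 1 + (n/d)^2 = (n^2 + d^2)/d^2 := by field_simp; ring
  rw [h, Real.sqrt_div (by positivity), Real.sqrt_sq_eq_abs]

lemma sphDist_comm (a b : OnePoint ℂ) : sphDist a b = sphDist b a := by
  cases a <;> cases b <;> simp [sphDist, mul_comm] <;>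
    rw [← norm_neg] <;> ring_nf

lemma Nn_ne_of_D_eq {t : ℝ} (ht : ¬(s1 t = 0 ∧ s2 t = 0)) (hD : Dd t = 0) : Nn t ≠ 0 := by
  rcases mul_eq_zero.mp hD with h | h
  · have h2 : s2 t ≠ 0 := fun hc => ht ⟨h, hc⟩
    simpa [Nn, h] using h2
  · have h1 : s1 t ≠ 0 := fun hc => ht ⟨hc, h⟩
    simpa [Nn, h] using h1

lemma S_pos {t : ℝ} (ht : ¬(s1 t = 0 ∧ s2 t = 0)) : 0 < Nn t ^ 2 + Dd t ^ 2 := by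
  by_cases hD : Dd t = 0
  · have := Nn_ne_of_D_eq ht hD
    have h1 : 0 < Nn t ^ 2 := by positivity
    nlinarith [sq_nonneg (Dd t)]
  · have h1 : 0 < Dd t ^ 2 := by positivity
    nlinarith [sq_nonneg (Nn t)]

lemma sphDist_eq_aux {t u : ℝ} (ht : ¬(s1 t = 0 ∧ s2 t = 0)) (hDt : Dd t = 0)
    (h1u : s1 u ≠ 0) (h2u : s2 u ≠ 0) :
    sphDist (sinRecipSum (t:ℂ)) (sinRecipSum (u:ℂ)) =
      |Nn t * Dd u - Nn u * Dd t| /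
        (Real.sqrt (Nn t ^ 2 + Dd t ^ 2) * Real.sqrt (Nn u ^ 2 + Dd u ^ 2)) := by
  have hDu : Dd u ≠ 0 := mul_ne_zero h1u h2u
  have hNt : Nn t ≠ 0 := Nn_ne_of_D_eq ht hDt
  rw [srs_infty t (mul_eq_zero.mp hDt), srs_coe u h1u h2u, inv_add_inv h1u h2u]
  show 1 / Real.sqrt (1 + ‖(((Nn u / Dd u : ℝ) : ℂ))‖ ^ 2) = _
  rw [Complex.norm_real, Real.norm_eq_abs, _root_.sq_abs, sqrt_one_add_div_sq hDu]
  have hS : Nn t ^ 2 + Dd t ^ 2 = Nn t ^ 2 := by rw [hDt]; ring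
  rw [hS, Real.sqrt_sq_eq_abs, hDt, mul_zero, sub_zero, abs_mul, one_div_div,
    mul_div_mul_left _ _ (abs_ne_zero.mpr hNt)]

lemma sphDist_eq (t u : ℝ) (ht : ¬(s1 t = 0 ∧ s2 t = 0)) (hu : ¬(s1 u = 0 ∧ s2 u = 0)) :
    sphDist (sinRecipSum (t:ℂ)) (sinRecipSum (u:ℂ)) =
      |Nn t * Dd u - Nn u * Dd t| /
        (Real.sqrt (Nn t ^ 2 + Dd t ^ 2) * Real.sqrt (Nn u ^ 2 + Dd u ^ 2)) := by
  by_cases hDt : Dd t = 0 <;> by_cases hDu : Dd u = 0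
  · rw [srs_infty t (mul_eq_zero.mp hDt), srs_infty u (mul_eq_zero.mp hDu)]
    show (0:ℝ) = _
    rw [hDt, hDu, mul_zero, mul_zero, sub_zero, abs_zero, zero_div]
  · have h1u : s1 u ≠ 0 := fun h => hDu (by simp [Dd, h])
    have h2u : s2 u ≠ 0 := fun h => hDu (by simp [Dd, h])
    exact sphDist_eq_aux ht hDt h1u h2u
  · have h1t : s1 t ≠ 0 := fun h => hDt (by simp [Dd, h])
    have h2t : s2 t ≠ 0 := fun h => hDt (by simp [Dd, h])
    rw [sphDist_comm, sphDist_eq_aux hu hDu h1t h2t, abs_sub_comm]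
    ring
  · have h1t : s1 t ≠ 0 := fun h => hDt (by simp [Dd, h])
    have h2t : s2 t ≠ 0 := fun h => hDt (by simp [Dd, h])
    have h1u : s1 u ≠ 0 := fun h => hDu (by simp [Dd, h])
    have h2u : s2 u ≠ 0 := fun h => hDu (by simp [Dd, h])
    rw [srs_coe t h1t h2t, srs_coe u h1u h2u, inv_add_inv h1t h2t, inv_add_inv h1u h2u]
    show ‖(((Nn t / Dd t : ℝ):ℂ) - ((Nn u / Dd u : ℝ):ℂ))‖ /
        (Real.sqrt (1 + ‖(((Nn t / Dd t : ℝ):ℂ))‖ ^ 2) *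
         Real.sqrt (1 + ‖(((Nn u / Dd u : ℝ):ℂ))‖ ^ 2)) = _
    rw [← Complex.ofReal_sub, Complex.norm_real, Real.norm_eq_abs, Complex.norm_real, Real.norm_eq_abs, Complex.norm_real, Real.norm_eq_abs,
      _root_.sq_abs, _root_.sq_abs, sqrt_one_add_div_sq hDt, sqrt_one_add_div_sq hDu,
      div_mul_div_comm, div_div_eq_mul_div]
    congr 1
    rw [← abs_mul, ← abs_mul]
    congr 1
    field_simp

-- copy in the basic lemmas from t1
lemma one_lt_A : 1 < 2 * Real.sqrt 2 - 1 := by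
  have h : (1:ℝ) < Real.sqrt 2 := by
    nlinarith [Real.sq_sqrt (by norm_num : (2:ℝ) ≥ 0), Real.sqrt_nonneg 2]
  nlinarith
lemma A_lt_two : 2 * Real.sqrt 2 - 1 < 2 := by
  have h : Real.sqrt 2 < 3/2 := by
    nlinarith [Real.sq_sqrt (by norm_num : (2:ℝ) ≥ 0), Real.sqrt_nonneg 2]
  nlinarith
lemma A_pos : 0 < 2 * Real.sqrt 2 - 1 := lt_trans one_pos one_lt_A
lemma irrational_A : Irrational (2 * Real.sqrt 2 - 1) := by
  have h2 : Irrational ((2:ℤ) * Real.sqrt 2) := irrational_sqrt_two.intCast_mul (by norm_num)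
  have h3 := h2.sub_intCast 1
  simpa using h3

lemma not_both_zero {t : ℝ} (ht : t ≠ 0) : ¬(s1 t = 0 ∧ s2 t = 0) := by
  rintro ⟨h1, h2⟩
  rw [s1, Real.sin_eq_zero_iff] at h1
  rw [s2, Real.sin_eq_zero_iff] at h2
  obtain ⟨k, hk⟩ := h1
  obtain ⟨i, hi⟩ := h2
  have hπ := Real.pi_ne_zero
  have htk : t = (k:ℝ) := by
    apply mul_left_cancel₀ hπ
    rw [mul_comm Real.pi ((k:ℝ)), hk]
  have hAt : (2 * Real.sqrt 2 - 1) * t = (i:ℝ) := by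
    apply mul_left_cancel₀ hπ
    rw [mul_comm Real.pi ((i:ℝ)), hi]
    ring
  rw [htk] at hAt ht
  have hk0 : (k:ℝ) ≠ 0 := ht
  have hq : (2 * Real.sqrt 2 - 1) = (i:ℝ) / (k:ℝ) := by
    rw [eq_div_iff hk0]; exact hAt
  have hirr : Irrational ((i:ℝ)/(k:ℝ)) := hq ▸ irrational_A
  have hcast : ((i:ℝ)/(k:ℝ)) = (((i:ℚ)/(k:ℚ) : ℚ) : ℝ) := by push_cast; ring
  rw [hcast] at hirr
  exact (Rat.not_irrational _) hirr

lemma exists_small_pos {θ : ℝ} (hθ : Irrational θ) {ε : ℝ} (hε : 0 < ε) :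
    ∃ j k : ℤ, 0 < (k:ℝ) * θ - j ∧ (k:ℝ) * θ - j < ε := by
  obtain ⟨n, hn⟩ := exists_nat_gt (1/ε)
  have hn0 : 0 < n := by
    rcases Nat.eq_zero_or_pos n with h | h
    · subst h; simp at hn; exact absurd hn (not_lt.mpr (by positivity))
    · exact h
  obtain ⟨j, k, hk0, hkn, h⟩ := Real.exists_int_int_abs_mul_sub_le θ hn0
  have hlt : |(k:ℝ) * θ - j| < ε := by
    have h1 : (1:ℝ)/(n+1) < ε := by
      rw [div_lt_iff₀ (by positivity)]
      rw [div_lt_iff₀ hε] at hn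
      nlinarith
    linarith [h]
  have hne : (k:ℝ) * θ - j ≠ 0 := by
    have h1 : Irrational ((k:ℝ) * θ) := by
      have := hθ.intCast_mul (show k ≠ 0 from hk0.ne')
      simpa using this
    have h2 := h1.sub_intCast j
    exact fun hc => (h2.ne_int 0) (by simpa using hc)
  rcases lt_or_gt_of_ne hne with hneg | hpos
  · refine ⟨-j, -k, ?_, ?_⟩ <;> push_cast <;>
      [nlinarith; nlinarith [abs_of_neg hneg ▸ hlt]]
  · exact ⟨j, k, hpos, by rwa [abs_of_pos hpos] at hlt⟩

set_option maxHeartbeats 1000000 in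
lemma zero_pole_pair {δ : ℝ} (hδ : 0 < δ) (hδ8 : δ ≤ 1/8) :
    ∃ x q : ℝ, |x - q| < δ ∧ 0 < x - q ∧
      s1 x ≠ 0 ∧ s2 x ≠ 0 ∧ Nn x = 0 ∧ s1 q = 0 ∧ s2 q ≠ 0 := by
  have hA1 : 1 < 2 * Real.sqrt 2 - 1 := one_lt_A
  have hA2 : 2 * Real.sqrt 2 - 1 < 2 := A_lt_two
  have hA0 : 0 < 2 * Real.sqrt 2 - 1 := A_pos
  have hπ : 0 < Real.pi := Real.pi_pos
  obtain ⟨j, k, he0, heδ⟩ :=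
    exists_small_pos (Irrational.inv irrational_A) (show 0 < δ/2 by linarith)
  obtain ⟨e, hedef⟩ : ∃ e : ℝ, e = 2 * ((k:ℝ) * (2 * Real.sqrt 2 - 1)⁻¹ - j) := ⟨_, rfl⟩
  have he0' : 0 < e := by rw [hedef]; linarith
  have heδ' : e < δ := by rw [hedef]; linarith
  have he8 : e < 1/8 := lt_of_lt_of_le heδ' hδ8
  obtain ⟨q, hq⟩ : ∃ q : ℝ, q = 2 * (j:ℝ) := ⟨_, rfl⟩
  have hkA : 2 * (k:ℝ) * (2 * Real.sqrt 2 - 1)⁻¹ = q + e := by rw [hq, hedef]; ring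
  have id1 : ∀ x : ℝ, s1 x = Real.sin (Real.pi * (x - q)) := by
    intro x
    rw [s1, show Real.pi * x = Real.pi * (x - q) + (j:ℝ) * (2*Real.pi) by rw [hq]; ring]
    exact Real.sin_add_int_mul_two_pi _ _
  have id2 : ∀ x : ℝ, s2 x = Real.sin ((2 * Real.sqrt 2 - 1) * Real.pi * (x - (q+e))) := by
    intro x
    rw [s2, show (2 * Real.sqrt 2 - 1) * Real.pi * x
        = (2 * Real.sqrt 2 - 1) * Real.pi * (x - (q+e)) + (k:ℝ) * (2*Real.pi) by
      rw [← hkA]; field_simp; ring]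
    exact Real.sin_add_int_mul_two_pi _ _
  obtain ⟨a, ha⟩ : ∃ a : ℝ, a = q + e/4 := ⟨_, rfl⟩
  obtain ⟨b, hb⟩ : ∃ b : ℝ, b = q + 3*e/4 := ⟨_, rfl⟩
  have hab : a ≤ b := by rw [ha, hb]; linarith
  have hAπ : 0 < (2 * Real.sqrt 2 - 1) * Real.pi := mul_pos hA0 hπ
  have hπe : 0 < Real.pi * e := mul_pos hπ he0'
  have hπe8 : Real.pi * e < Real.pi * (1/8) := mul_lt_mul_of_pos_left he8 hπ
  have hAπe : 0 < (2 * Real.sqrt 2 - 1) * Real.pi * e := mul_pos hAπ he0'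
  have hAπe8 : (2 * Real.sqrt 2 - 1) * Real.pi * e
      < (2 * Real.sqrt 2 - 1) * Real.pi * (1/8) := mul_lt_mul_of_pos_left he8 hAπ
  have hAπ2π : (2 * Real.sqrt 2 - 1) * Real.pi < 2 * Real.pi :=
    mul_lt_mul_of_pos_right hA2 hπ
  have h3A : 0 < Real.pi * e * (3 * (2 * Real.sqrt 2 - 1) - 1) :=
    mul_pos hπe (by nlinarith)
  have h3A' : 0 < Real.pi * e * (3 - (2 * Real.sqrt 2 - 1)) :=
    mul_pos hπe (by nlinarith)
  have hs1pos : ∀ x ∈ Set.Icc a b, 0 < s1 x := by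
    intro x hx
    obtain ⟨hx1, hx2⟩ := hx
    rw [ha] at hx1; rw [hb] at hx2
    rw [id1]
    apply Real.sin_pos_of_pos_of_lt_pi
    · nlinarith
    · nlinarith
  have hs2neg : ∀ x ∈ Set.Icc a b, s2 x < 0 := by
    intro x hx
    obtain ⟨hx1, hx2⟩ := hx
    rw [ha] at hx1; rw [hb] at hx2
    rw [id2]
    apply Real.sin_neg_of_neg_of_neg_pi_lt
    · have hu : x - (q+e) ≤ -(e/4) := by linarith
      nlinarith [mul_le_mul_of_nonneg_left hu hAπ.le]
    · have hu : -(3*e/4) ≤ x - (q+e) := by linarith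
      nlinarith [mul_le_mul_of_nonneg_left hu hAπ.le]
  have hs1a : s1 a = Real.sin (Real.pi * (e/4)) := by rw [id1]; congr 1; rw [ha]; ring
  have hs2a : s2 a = -Real.sin ((2 * Real.sqrt 2 - 1) * Real.pi * (3*e/4)) := by
    rw [id2, show (2 * Real.sqrt 2 - 1) * Real.pi * (a - (q+e))
      = -((2 * Real.sqrt 2 - 1) * Real.pi * (3*e/4)) by rw [ha]; ring, Real.sin_neg]
  have hs1b : s1 b = Real.sin (Real.pi * (3*e/4)) := by rw [id1]; congr 1; rw [hb]; ring
  have hs2b : s2 b = -Real.sin ((2 * Real.sqrt 2 - 1) * Real.pi * (e/4)) := by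
    rw [id2, show (2 * Real.sqrt 2 - 1) * Real.pi * (b - (q+e))
      = -((2 * Real.sqrt 2 - 1) * Real.pi * (e/4)) by rw [hb]; ring, Real.sin_neg]
  obtain ⟨F, hF⟩ : ∃ F : ℝ → ℝ, F = fun x => (s1 x)⁻¹ + (s2 x)⁻¹ := ⟨_, rfl⟩
  have hFa : 0 < F a := by
    rw [hF]
    simp only [hs1a, hs2a]
    have h1 : 0 < Real.sin (Real.pi * (e/4)) :=
      Real.sin_pos_of_pos_of_lt_pi (by nlinarith) (by nlinarith)
    have h2 : Real.sin (Real.pi * (e/4)) <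
        Real.sin ((2 * Real.sqrt 2 - 1) * Real.pi * (3*e/4)) := by
      apply Real.sin_lt_sin_of_lt_of_le_pi_div_two
      · nlinarith
      · nlinarith
      · nlinarith
    have h3 := one_div_lt_one_div_of_lt h1 h2
    rw [one_div, one_div] at h3
    have h4 : 0 < (Real.sin ((2 * Real.sqrt 2 - 1) * Real.pi * (3*e/4)))⁻¹ := by
      have h5 : 0 < Real.sin ((2 * Real.sqrt 2 - 1) * Real.pi * (3*e/4)) := lt_trans h1 h2
      positivity
    rw [inv_neg]
    linarith
  have hFb : F b < 0 := by
    rw [hF]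
    simp only [hs1b, hs2b]
    have h1 : 0 < Real.sin ((2 * Real.sqrt 2 - 1) * Real.pi * (e/4)) :=
      Real.sin_pos_of_pos_of_lt_pi (by nlinarith) (by nlinarith)
    have h2 : Real.sin ((2 * Real.sqrt 2 - 1) * Real.pi * (e/4)) <
        Real.sin (Real.pi * (3*e/4)) := by
      apply Real.sin_lt_sin_of_lt_of_le_pi_div_two
      · nlinarith
      · nlinarith
      · nlinarith
    have h3 := one_div_lt_one_div_of_lt h1 h2
    rw [one_div, one_div] at h3
    rw [inv_neg]
    linarith
  have hc1 : Continuous s1 := by unfold s1; fun_prop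
  have hc2 : Continuous s2 := by unfold s2; fun_prop
  have hcont : ContinuousOn F (Set.Icc a b) := by
    rw [hF]
    apply ContinuousOn.add
    · exact ContinuousOn.inv₀ hc1.continuousOn (fun x hx => (hs1pos x hx).ne')
    · exact ContinuousOn.inv₀ hc2.continuousOn (fun x hx => (hs2neg x hx).ne)
  have h0mem : (0:ℝ) ∈ Set.Icc (F b) (F a) := ⟨le_of_lt hFb, le_of_lt hFa⟩
  obtain ⟨x, hxmem, hFx⟩ := intermediate_value_Icc' hab hcont h0mem
  have hx1 : s1 x ≠ 0 := (hs1pos x hxmem).ne'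
  have hx2 : s2 x ≠ 0 := (hs2neg x hxmem).ne
  obtain ⟨hxa, hxb⟩ := hxmem
  rw [ha] at hxa; rw [hb] at hxb
  refine ⟨x, q, ?_, by linarith, hx1, hx2, ?_, ?_, ?_⟩
  · rw [abs_of_pos (by linarith)]
    linarith
  · have hFx' : (s1 x)⁻¹ + (s2 x)⁻¹ = 0 := by rw [hF] at hFx; exact hFx
    rw [Nn]
    field_simp at hFx'
    linarith
  · rw [id1]; simp
  · rw [id2, show (2 * Real.sqrt 2 - 1) * Real.pi * (q - (q+e))
      = -((2 * Real.sqrt 2 - 1) * Real.pi * e) by ring, Real.sin_neg, neg_ne_zero]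
    refine (Real.sin_pos_of_pos_of_lt_pi (by nlinarith) (by nlinarith)).ne'

lemma srs_zero_at {x : ℝ} (h1 : s1 x ≠ 0) (h2 : s2 x ≠ 0) (hN : Nn x = 0) :
    sinRecipSum (x:ℂ) = ((0:ℂ) : OnePoint ℂ) := by
  rw [srs_coe x h1 h2]
  have hv : (s1 x)⁻¹ + (s2 x)⁻¹ = Nn x / Dd x := by rw [Nn, Dd, inv_add_inv h1 h2]
  rw [hv, hN, zero_div]
  norm_num

lemma Qcont (L : ℝ) (hL : 0 < L) :
    ∃ δ₀ > (0:ℝ), ∀ t u : ℝ, t ∈ Set.Icc (1/2 : ℝ) (L+2) → u ∈ Set.Icc (1/2:ℝ) (L+2) →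
      |u - t| < δ₀ →
      |Nn t * Dd u - Nn u * Dd t| /
        (Real.sqrt (Nn t ^ 2 + Dd t ^ 2) * Real.sqrt (Nn u ^ 2 + Dd u ^ 2)) < 1/4 := by
  have hNc : Continuous Nn := by unfold Nn s1 s2; fun_prop
  have hDc : Continuous Dd := by unfold Dd s1 s2; fun_prop
  obtain ⟨K, hK⟩ : ∃ K : Set ℝ, K = Set.Icc (1/2 : ℝ) (L+2) := ⟨_, rfl⟩
  obtain ⟨Q, hQdef⟩ : ∃ Q : ℝ × ℝ → ℝ, Q = fun p => |Nn p.1 * Dd p.2 - Nn p.2 * Dd p.1| /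
      (Real.sqrt (Nn p.1 ^ 2 + Dd p.1 ^ 2) * Real.sqrt (Nn p.2 ^ 2 + Dd p.2 ^ 2)) := ⟨_, rfl⟩
  have hKnz : ∀ t ∈ K, ¬(s1 t = 0 ∧ s2 t = 0) := by
    intro t ht
    rw [hK] at ht
    exact not_both_zero (by intro h0; rw [h0] at ht; have := ht.1; norm_num at this)
  have hQc : ContinuousOn Q (K ×ˢ K) := by
    rw [hQdef]
    apply ContinuousOn.div
    · exact (((hNc.comp continuous_fst).mul (hDc.comp continuous_snd)).sub
        ((hNc.comp continuous_snd).mul (hDc.comp continuous_fst))).abs.continuousOn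
    · exact ((((hNc.comp continuous_fst).pow 2).add
        ((hDc.comp continuous_fst).pow 2)).sqrt.mul
        (((hNc.comp continuous_snd).pow 2).add
        ((hDc.comp continuous_snd).pow 2)).sqrt).continuousOn
    · rintro ⟨t, u⟩ hp
      have h1 := S_pos (hKnz t hp.1)
      have h2 := S_pos (hKnz u hp.2)
      have := Real.sqrt_pos.mpr h1
      have := Real.sqrt_pos.mpr h2
      positivity
  have hcompact : IsCompact (K ×ˢ K) := by
    rw [hK]; exact isCompact_Icc.prod isCompact_Icc
  have hUC := hcompact.uniformContinuousOn_of_continuous hQc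
  rw [Metric.uniformContinuousOn_iff] at hUC
  obtain ⟨δ₀, hδ₀, hUC'⟩ := hUC (1/4) (by norm_num)
  refine ⟨δ₀, hδ₀, ?_⟩
  intro t u ht hu hdist
  have h1 : ((t,u) : ℝ×ℝ) ∈ K ×ˢ K := ⟨by rwa [hK], by rwa [hK]⟩
  have h2 : ((t,t) : ℝ×ℝ) ∈ K ×ˢ K := ⟨by rwa [hK], by rwa [hK]⟩
  have hd : dist ((t,u):ℝ×ℝ) ((t,t):ℝ×ℝ) < δ₀ := by
    rw [Prod.dist_eq]
    simp only [dist_self, Real.dist_eq]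
    exact max_lt (lt_of_le_of_lt (by norm_num) hdist) hdist
  have hlt := hUC' _ h1 _ h2 hd
  have hQtt : Q (t,t) = 0 := by rw [hQdef]; simp
  rw [Real.dist_eq, hQtt, sub_zero] at hlt
  have := le_abs_self (Q (t,u))
  have hfin : Q (t,u) < 1/4 := lt_of_le_of_lt this hlt
  rwa [hQdef] at hfin

lemma sq_of_sphlt {c S1 S2 : ℝ} (h1 : 0 < S1) (h2 : 0 < S2)
    (h : |c| / (Real.sqrt S1 * Real.sqrt S2) < 1/4) : 16 * c^2 < S1 * S2 := by
  have hs1 : 0 < Real.sqrt S1 := Real.sqrt_pos.mpr h1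
  have hs2 : 0 < Real.sqrt S2 := Real.sqrt_pos.mpr h2
  rw [div_lt_iff₀ (by positivity)] at h
  have hsq := mul_self_lt_mul_self (abs_nonneg c) h
  have e12 : Real.sqrt S1 ^ 2 * Real.sqrt S2 ^ 2 = S1 * S2 := by
    rw [Real.sq_sqrt h1.le, Real.sq_sqrt h2.le]
  nlinarith [_root_.sq_abs c, e12, hsq]
end SRS

set_option maxHeartbeats 1000000 in
/-- `1/sin(π z) + 1/sin((2√2 - 1) π z)` is not a meromorphic almost
periodic function on `ℂ`: its zeros and poles are not separated, i.e. for every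
`δ > 0` there are a zero `z'` and a pole `z''` with `|z' - z''| < δ`. -/
theorem sinRecipSum_not_meromorphicAP :
    ¬ MeromorphicAPOn sinRecipSum ⊥ ⊤ ∧
    ∀ δ > (0 : ℝ), ∃ z' z'' : ℂ, sinRecipSum z' = ((0 : ℂ) : OnePoint ℂ) ∧
      sinRecipSum z'' = ∞ ∧ ‖z' - z''‖ < δ := by
  constructor
  · rintro ⟨-, hAP⟩
    obtain ⟨L, hL, hEx⟩ := hAP (1/4) (by norm_num) (-1) 1
      (EReal.bot_lt_coe _) (by norm_num) (EReal.coe_lt_top _)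
    obtain ⟨δ₀, hδ₀, hQ⟩ := SRS.Qcont L hL
    obtain ⟨x, q, hxq, hxqpos, h1x, h2x, hNx, h1q, h2q⟩ :=
      SRS.zero_pole_pair (δ := min δ₀ (1/8)) (lt_min hδ₀ (by norm_num)) (min_le_right _ _)
    have hxqδ₀ : x - q < δ₀ := by
      have := lt_of_abs_lt hxq
      have := min_le_left δ₀ (1/8 : ℝ)
      linarith
    have hxq8 : x - q < 1/8 := by
      have := lt_of_abs_lt hxq
      have := min_le_right δ₀ (1/8 : ℝ)
      linarith
    obtain ⟨τ, hτ, hτ1, hτ2⟩ := hEx (1 - x)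
    have him : ∀ r : ℝ, (r:ℂ) ∈ Strip ((-1:ℝ):EReal) ((1:ℝ):EReal) := by
      intro r
      refine ⟨?_, ?_⟩ <;> rw [Complex.ofReal_im]
      · exact EReal.coe_lt_coe_iff.mpr (by norm_num)
      · exact EReal.coe_lt_coe_iff.mpr (by norm_num)
    have Hx0 := hτ (x:ℂ) (him x)
    have Hq0 := hτ (q:ℂ) (him q)
    rw [← Complex.ofReal_add] at Hx0 Hq0
    have htx : ¬(SRS.s1 (x+τ) = 0 ∧ SRS.s2 (x+τ) = 0) :=
      SRS.not_both_zero (by intro h; linarith [h])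
    have htq : ¬(SRS.s1 (q+τ) = 0 ∧ SRS.s2 (q+τ) = 0) := by
      apply SRS.not_both_zero
      intro h
      have h0 : q + τ = 0 := h
      linarith
    have hux : ¬(SRS.s1 x = 0 ∧ SRS.s2 x = 0) := fun h => h1x h.1
    have huq : ¬(SRS.s1 q = 0 ∧ SRS.s2 q = 0) := fun h => h2q h.2
    rw [SRS.sphDist_eq (x+τ) x htx hux] at Hx0
    rw [SRS.sphDist_eq (q+τ) q htq huq] at Hq0
    have hmemx : x + τ ∈ Set.Icc (1/2 : ℝ) (L+2) := ⟨by linarith, by linarith⟩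
    have hmemq : q + τ ∈ Set.Icc (1/2 : ℝ) (L+2) := ⟨by linarith, by linarith⟩
    have habs : |(q+τ) - (x+τ)| < δ₀ := by
      rw [show (q+τ) - (x+τ) = -(x - q) by ring, abs_neg, abs_of_pos hxqpos]
      exact hxqδ₀
    have Hmid := hQ (x+τ) (q+τ) hmemx hmemq habs
    -- squared forms
    have hS1 : 0 < SRS.Nn (x+τ)^2 + SRS.Dd (x+τ)^2 := SRS.S_pos htx
    have hS2 : 0 < SRS.Nn (q+τ)^2 + SRS.Dd (q+τ)^2 := SRS.S_pos htq
    have hSx : 0 < SRS.Nn x^2 + SRS.Dd x^2 := SRS.S_pos hux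
    have hSq : 0 < SRS.Nn q^2 + SRS.Dd q^2 := SRS.S_pos huq
    have HxSq := SRS.sq_of_sphlt hS1 hSx Hx0
    have HqSq := SRS.sq_of_sphlt hS2 hSq Hq0
    have HmSq := SRS.sq_of_sphlt hS1 hS2 Hmid
    have hDq : SRS.Dd q = 0 := by rw [SRS.Dd, h1q, zero_mul]
    have hNq : SRS.Nn q ≠ 0 := by rw [SRS.Nn, h1q, zero_add]; exact h2q
    have hDx : SRS.Dd x ≠ 0 := mul_ne_zero h1x h2x
    rw [hNx] at HxSq
    rw [hDq] at HqSq
    have hDx2 : 0 < SRS.Dd x ^ 2 := by positivity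
    have hNq2 : 0 < SRS.Nn q ^ 2 := by positivity
    have A : 16 * SRS.Nn (x+τ)^2 < SRS.Nn (x+τ)^2 + SRS.Dd (x+τ)^2 := by
      nlinarith [HxSq, hDx2]
    have B : 16 * SRS.Dd (q+τ)^2 < SRS.Nn (q+τ)^2 + SRS.Dd (q+τ)^2 := by
      nlinarith [HqSq, hNq2]
    have lag : (SRS.Nn (x+τ)*SRS.Dd (q+τ) - SRS.Nn (q+τ)*SRS.Dd (x+τ))^2
        + (SRS.Nn (x+τ)*SRS.Nn (q+τ) + SRS.Dd (x+τ)*SRS.Dd (q+τ))^2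
        = (SRS.Nn (x+τ)^2 + SRS.Dd (x+τ)^2) * (SRS.Nn (q+τ)^2 + SRS.Dd (q+τ)^2) := by ring
    nlinarith [HmSq, lag, A, B, mul_pos hS1 hS2,
      sq_nonneg (SRS.Nn (x+τ)*SRS.Nn (q+τ) - SRS.Dd (x+τ)*SRS.Dd (q+τ)),
      mul_le_mul_of_nonneg_right A.le (sq_nonneg (SRS.Nn (q+τ))),
      mul_le_mul_of_nonneg_right B.le (sq_nonneg (SRS.Dd (x+τ))),
      mul_nonneg (sq_nonneg (SRS.Nn (x+τ))) (sq_nonneg (SRS.Dd (q+τ))),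
      mul_nonneg (sq_nonneg (SRS.Nn (x+τ))) (sq_nonneg (SRS.Nn (q+τ))),
      mul_nonneg (sq_nonneg (SRS.Dd (x+τ))) (sq_nonneg (SRS.Nn (q+τ))),
      mul_nonneg (sq_nonneg (SRS.Dd (x+τ))) (sq_nonneg (SRS.Dd (q+τ)))]
  · intro δ hδ
    obtain ⟨x, q, hxq, hxqpos, h1x, h2x, hNx, h1q, h2q⟩ :=
      SRS.zero_pole_pair (δ := min δ (1/8)) (lt_min hδ (by norm_num)) (min_le_right _ _)
    refine ⟨(x:ℂ), (q:ℂ), SRS.srs_zero_at h1x h2x hNx, SRS.srs_infty q (Or.inl h1q), ?_⟩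
    rw [← Complex.ofReal_sub, Complex.norm_real, Real.norm_eq_abs]
    exact lt_of_lt_of_le hxq (min_le_left _ _)
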